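/- Let Θ = U D V^T be an SVD with U, V having orthonormal columns, and let P_T be the associated tangent-space projection. Then for every matrix M ∈ ℝ^{d1×d2}: ‖M‖_N ≥ ‖(I − P_T)M‖_N + ⟨U V^T, M⟩. -/

import Mathlib

open Matrix

noncomputable def frobNorm {m n : ℕ} (M : Matrix (Fin m) (Fin n) ℝ) : ℝ :=
  Real.sqrt (Matrix.trace (Mᵀ * M))

noncomputable def nuclearNorm {m n : ℕ} (M : Matrix (Fin m) (Fin n) ℝ) : ℝ :=
  ∑ i, Real.sqrt ((show (Mᵀ * M).IsHermitian by simpa using Matrix.isHermitian_conjTranspose_mul_self M).eigenvalues i)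

noncomputable def matSpectralNorm {m n : ℕ} (M : Matrix (Fin m) (Fin n) ℝ) : ℝ :=
  ⨆ i, Real.sqrt ((show (Mᵀ * M).IsHermitian by simpa using Matrix.isHermitian_conjTranspose_mul_self M).eigenvalues i)

noncomputable def mip {m n : ℕ} (A B : Matrix (Fin m) (Fin n) ℝ) : ℝ :=
  Matrix.trace (Aᵀ * B)

/-!
The nuclear norm is dual to the spectral norm: `tr (Zᵀ M) ≤ ‖M‖_N` whenever `ZᵀZ ≤ 1`, by
Cauchy–Schwarz column by column in an eigenbasis of `MᵀM`. Apply this to `Z = U Vᵀ + W`, where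
`W = A (AᵀA)^(-1/2)` (pseudo-inverse) is the polar factor of
`A = (I - P_T) M = (I - U Uᵀ) M (I - V Vᵀ)`. Then `W` is a contraction with `tr (Wᵀ A) = ‖A‖_N`, and
since `Uᵀ A = 0` and `A V = 0` also `Uᵀ W = 0` and `W V = 0`; hence `Z` is still a contraction and
`tr (Wᵀ M) = tr (Wᵀ A)`.
-/

open scoped MatrixOrder

namespace Matrix

variable {m n : Type*} [Fintype m] [Fintype n]

lemma trace_transpose_mul_le_sum_sqrt (X Y : Matrix m n ℝ) :
    trace (Xᵀ * Y) ≤ ∑ i, √((Xᵀ * X) i i) * √((Yᵀ * Y) i i) := by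
  simp only [trace, diag, mul_apply, transpose_apply]
  gcongr with i
  simpa only [sq] using Real.sum_mul_le_sqrt_mul_sqrt Finset.univ (X · i) (Y · i)

lemma IsHermitian.trace_cfc {𝕜 : Type*} [RCLike 𝕜] [DecidableEq n] {S : Matrix n n 𝕜}
    (hS : S.IsHermitian) (f : ℝ → ℝ) : trace (cfc f S) = ∑ i, (f (hS.eigenvalues i) : 𝕜) := by
  rw [hS.cfc_eq, IsHermitian.cfc, Unitary.conjStarAlgAut_apply, trace_mul_cycle,
    Unitary.coe_star_mul_self, one_mul, trace_diagonal]
  rfl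

variable {r : Type*} [Fintype r] [DecidableEq n]
  {U : Matrix m r ℝ} {V : Matrix n r ℝ} {W : Matrix m n ℝ}

lemma transpose_mul_one_sub_self_mul_transpose [DecidableEq m] [DecidableEq r]
    (hU : Uᵀ * U = 1) : Uᵀ * (1 - U * Uᵀ) = 0 := by
  rw [Matrix.mul_sub, Matrix.mul_one, ← Matrix.mul_assoc, hU, Matrix.one_mul, sub_self]

lemma one_sub_mul_transpose_mul_self [DecidableEq r] (hV : Vᵀ * V = 1) :
    (1 - V * Vᵀ) * V = 0 := by
  rw [Matrix.sub_mul, Matrix.one_mul, Matrix.mul_assoc, hV, Matrix.mul_one, sub_self]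

lemma trace_transpose_mul_compress [DecidableEq m] (hUW : Uᵀ * W = 0) (hWV : W * V = 0)
    (M : Matrix m n ℝ) : trace (Wᵀ * ((1 - U * Uᵀ) * M * (1 - V * Vᵀ))) = trace (Wᵀ * M) := by
  have hWPU : Wᵀ * (1 - U * Uᵀ) = Wᵀ := by
    rw [Matrix.mul_sub, ← Matrix.mul_assoc, ← transpose_transpose U, ← transpose_mul, hUW]
    simp
  have hPVW : (1 - V * Vᵀ) * Wᵀ = Wᵀ := by
    rw [Matrix.sub_mul, Matrix.mul_assoc, ← transpose_mul, hWV]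
    simp
  rw [← Matrix.mul_assoc, ← Matrix.mul_assoc, hWPU, trace_mul_comm, ← Matrix.mul_assoc, hPVW]

lemma one_sub_transpose_mul_self_posSemidef [DecidableEq r] (hU : Uᵀ * U = 1) (hV : Vᵀ * V = 1)
    (hUW : Uᵀ * W = 0) (hWV : W * V = 0) (hW : (1 - Wᵀ * W).PosSemidef) :
    (1 - (U * Vᵀ + W)ᵀ * (U * Vᵀ + W)).PosSemidef := by
  have hWU : Wᵀ * U = 0 := by rw [← transpose_transpose U, ← transpose_mul, hUW, transpose_zero]
  have hVW : Vᵀ * Wᵀ = 0 := by rw [← transpose_mul, hWV, transpose_zero]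
  have hZZ : (U * Vᵀ + W)ᵀ * (U * Vᵀ + W) = V * Vᵀ + Wᵀ * W := by
    simp only [transpose_add, transpose_mul, transpose_transpose, Matrix.add_mul, Matrix.mul_add,
      Matrix.mul_assoc]
    simp only [← Matrix.mul_assoc Uᵀ, hU, hUW, ← Matrix.mul_assoc Wᵀ U, hWU]
    simp
  have hfactor : (1 - V * Vᵀ)ᵀ * (1 - Wᵀ * W) * (1 - V * Vᵀ) = 1 - (V * Vᵀ + Wᵀ * W) := by
    simp only [transpose_sub, transpose_one, transpose_mul, transpose_transpose, Matrix.sub_mul,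
      Matrix.mul_sub, Matrix.one_mul, Matrix.mul_one, Matrix.mul_assoc]
    simp only [← Matrix.mul_assoc Vᵀ, hV, hVW, ← Matrix.mul_assoc W V, hWV, Matrix.zero_mul,
      Matrix.mul_zero, sub_zero, Matrix.one_mul, sub_self]
    abel
  rw [hZZ, ← hfactor]
  have := hW.conjTranspose_mul_mul_same (1 - V * Vᵀ)
  rwa [conjTranspose_eq_transpose_of_trivial] at this

end Matrix

lemma isHermitian_transpose_mul_self {m n : ℕ} (M : Matrix (Fin m) (Fin n) ℝ) :
    (Mᵀ * M).IsHermitian := by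
  simpa using isHermitian_conjTranspose_mul_self M

lemma nuclearNorm_eq_sum_sqrt_eigenvalues {m n : ℕ} (M : Matrix (Fin m) (Fin n) ℝ) :
    nuclearNorm M = ∑ i, √((isHermitian_transpose_mul_self M).eigenvalues i) := rfl

lemma trace_transpose_mul_le_nuclearNorm {m n : ℕ} {Z : Matrix (Fin m) (Fin n) ℝ}
    (hZ : (1 - Zᵀ * Z).PosSemidef) (M : Matrix (Fin m) (Fin n) ℝ) :
    trace (Zᵀ * M) ≤ nuclearNorm M := by
  set hS := isHermitian_transpose_mul_self M
  set Q : Matrix (Fin n) (Fin n) ℝ := ↑hS.eigenvectorUnitary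
  have hQQ : Qᵀ * Q = 1 := by
    simpa [Q, star_eq_conjTranspose] using Unitary.coe_star_mul_self hS.eigenvectorUnitary
  have hQQ' : Q * Qᵀ = 1 := mul_eq_one_comm.mp hQQ
  have hMQ : (M * Q)ᵀ * (M * Q) = diagonal hS.eigenvalues := by
    have := hS.conjStarAlgAut_star_eigenvectorUnitary
    simp only [Unitary.conjStarAlgAut_apply, star_star, Unitary.coe_star, RCLike.ofReal_real_eq_id,
      Function.id_comp] at this
    rw [← this, transpose_mul]
    simp [Q, star_eq_conjTranspose, Matrix.mul_assoc]
  have hZQ : (1 - (Z * Q)ᵀ * (Z * Q)).PosSemidef := by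
    convert hZ.conjTranspose_mul_mul_same Q using 1
    simp [conjTranspose_eq_transpose_of_trivial, Matrix.mul_sub, Matrix.sub_mul, hQQ,
      Matrix.mul_assoc]
  calc trace (Zᵀ * M) = trace ((Z * Q)ᵀ * (M * Q)) := by
        rw [transpose_mul, Matrix.mul_assoc, trace_mul_comm Qᵀ, Matrix.mul_assoc, Matrix.mul_assoc,
          hQQ', Matrix.mul_one]
    _ ≤ ∑ i, √(((Z * Q)ᵀ * (Z * Q)) i i) * √(((M * Q)ᵀ * (M * Q)) i i) :=
        trace_transpose_mul_le_sum_sqrt _ _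
    _ ≤ ∑ i, 1 * √(hS.eigenvalues i) := by
        gcongr with i
        · exact Real.sqrt_le_one.mpr (by simpa using hZQ.diag_nonneg (i := i))
        · rw [hMQ, diagonal_apply_eq]
    _ = nuclearNorm M := by simp [nuclearNorm_eq_sum_sqrt_eigenvalues]

lemma exists_contraction_trace_eq_nuclearNorm {m n p q : ℕ} {A : Matrix (Fin m) (Fin n) ℝ}
    {U : Matrix (Fin m) (Fin p) ℝ} {V : Matrix (Fin n) (Fin q) ℝ}
    (hUA : Uᵀ * A = 0) (hAV : A * V = 0) :
    ∃ W : Matrix (Fin m) (Fin n) ℝ, (1 - Wᵀ * W).PosSemidef ∧ trace (Wᵀ * A) = nuclearNorm A ∧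
      Uᵀ * W = 0 ∧ W * V = 0 := by
  set S := Aᵀ * A
  have hS : S.IsHermitian := isHermitian_transpose_mul_self A
  have hc (g : ℝ → ℝ) : ContinuousOn g (spectrum ℝ S) := S.finite_real_spectrum.continuousOn g
  have hmul (f g : ℝ → ℝ) : cfc (fun x => f x * g x) S = cfc f S * cfc g S :=
    cfc_mul f g S (hc f) (hc g)
  have hmul_id (f : ℝ → ℝ) : cfc (fun x => f x * x) S = cfc f S * S := by
    rw [hmul f (fun x => x), cfc_id' ℝ S]
  -- `(√0)⁻¹ = 0`, so `N` is the pseudo-inverse square root of `S` and `A * N` is the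
  -- partial isometry in the polar decomposition of `A`.
  set N := cfc (fun x => (√x)⁻¹) S
  have hNt : Nᵀ = N := by
    simpa [IsSelfAdjoint, star_eq_conjTranspose] using (cfc_predicate _ S : IsSelfAdjoint N)
  have hNS : N * S = cfc Real.sqrt S := by
    rw [← hmul_id]
    exact cfc_congr fun x _ => by rw [inv_mul_eq_div, Real.div_sqrt]
  have hNV : N * V = 0 := by
    have hN : N = cfc (fun x => (√x)⁻¹ ^ 3) S * S := by
      rw [← hmul_id]
      refine cfc_congr fun x _ => ?_
      rcases le_or_gt x 0 with hx | hx
      · simp [Real.sqrt_eq_zero'.mpr hx]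
      · have := Real.sqrt_pos.mpr hx
        field_simp
        rw [Real.sq_sqrt hx.le]
    rw [hN, Matrix.mul_assoc, Matrix.mul_assoc, hAV, Matrix.mul_zero, Matrix.mul_zero]
  refine ⟨A * N, ?_, ?_, by rw [← Matrix.mul_assoc, hUA, Matrix.zero_mul],
    by rw [Matrix.mul_assoc, hNV, Matrix.mul_zero]⟩
  · have : 1 - (A * N)ᵀ * (A * N) = cfc (fun x => 1 - (√x)⁻¹ * x * (√x)⁻¹) S := by
      rw [cfc_sub _ _ S (hc _) (hc _), cfc_const_one ℝ S, hmul, hmul_id, transpose_mul, hNt]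
      simp only [S, N, Matrix.mul_assoc]
    rw [this, ← nonneg_iff_posSemidef]
    refine cfc_nonneg fun x _ => sub_nonneg.mpr ?_
    rw [inv_mul_eq_div, Real.div_sqrt]
    exact mul_inv_le_one
  · calc trace ((A * N)ᵀ * A) = trace (N * S) := by
          rw [transpose_mul, hNt, Matrix.mul_assoc]
      _ = ∑ i, √(hS.eigenvalues i) := by rw [hNS, hS.trace_cfc]; rfl
      _ = nuclearNorm A := (nuclearNorm_eq_sum_sqrt_eigenvalues A).symm

theorem stmt14_general {d1 d2 r : ℕ}
    (U : Matrix (Fin d1) (Fin r) ℝ) (V : Matrix (Fin d2) (Fin r) ℝ)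
    (hU : Uᵀ * U = 1) (hV : Vᵀ * V = 1)
    (PT : Matrix (Fin d1) (Fin d2) ℝ → Matrix (Fin d1) (Fin d2) ℝ)
    (hPT : ∀ N, PT N = U * Uᵀ * N + N * (V * Vᵀ) - U * Uᵀ * N * (V * Vᵀ))
    (M : Matrix (Fin d1) (Fin d2) ℝ) :
    nuclearNorm (M - PT M) + mip (U * Vᵀ) M ≤ nuclearNorm M := by
  have hA : M - PT M = (1 - U * Uᵀ) * M * (1 - V * Vᵀ) := by
    simp only [hPT, Matrix.sub_mul, Matrix.mul_sub, Matrix.one_mul, Matrix.mul_one]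
    abel
  have hUA : Uᵀ * (M - PT M) = 0 := by
    rw [hA, ← Matrix.mul_assoc, ← Matrix.mul_assoc, transpose_mul_one_sub_self_mul_transpose hU,
      Matrix.zero_mul, Matrix.zero_mul]
  have hAV : (M - PT M) * V = 0 := by
    rw [hA, Matrix.mul_assoc, one_sub_mul_transpose_mul_self hV, Matrix.mul_zero]
  obtain ⟨W, hW, hWA, hUW, hWV⟩ := exists_contraction_trace_eq_nuclearNorm hUA hAV
  have hdual := trace_transpose_mul_le_nuclearNorm
    (one_sub_transpose_mul_self_posSemidef hU hV hUW hWV hW) M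
  rwa [transpose_add, Matrix.add_mul, trace_add, ← trace_transpose_mul_compress hUW hWV, ← hA, hWA,
    add_comm] at hdual

/-- Subdifferential-type lower bound for the nuclear norm at Θ = U D Vᵀ. -/
theorem stmt14 {d1 d2 r : ℕ}
    (U : Matrix (Fin d1) (Fin r) ℝ) (V : Matrix (Fin d2) (Fin r) ℝ) (dv : Fin r → ℝ)
    (hU : Uᵀ * U = 1) (hV : Vᵀ * V = 1) (hdv : ∀ i, 0 < dv i)
    (Θ : Matrix (Fin d1) (Fin d2) ℝ) (hΘ : Θ = U * Matrix.diagonal dv * Vᵀ)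
    (PT : Matrix (Fin d1) (Fin d2) ℝ → Matrix (Fin d1) (Fin d2) ℝ)
    (hPT : ∀ N, PT N = U * Uᵀ * N + N * (V * Vᵀ) - U * Uᵀ * N * (V * Vᵀ))
    (M : Matrix (Fin d1) (Fin d2) ℝ) :
    nuclearNorm (M - PT M) + mip (U * Vᵀ) M ≤ nuclearNorm M :=
  stmt14_general U V hU hV PT hPT M
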